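/- Let k ≥ 1 be an integer and let Φ be as in the context. Define P_k on X_k by (P_k x)_n(j) = (k·2^n)^{1/q} Φ_{n,j}(x) for n ≥ 0, 1 ≤ j ≤ k·2^n. Then for every x ∈ X_k, P_k x ∈ Y_k and ‖P_k x‖ ≤ q² ‖x‖; and P_k y = y for every y ∈ Y_k. In particular, P_k is a bounded linear projection from X_k onto Y_k of norm at most q². -/

import Mathlib

open MeasureTheory Set ENNReal

/-- The weak `L^p` "norm": `sup { (∫_B |f| dμ) / μ(B)^(1/q) }` over measurable `B`
with `0 < μ B < ∞`, computed in `ℝ≥0∞`. -/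
noncomputable def wnorm {α : Type*} [MeasurableSpace α] (q : ℝ) (μ : Measure α)
    (f : α → ℝ) : ℝ≥0∞ :=
  ⨆ (B : Set α) (_ : MeasurableSet B ∧ 0 < μ B ∧ μ B < ⊤),
    (∫⁻ x in B, ENNReal.ofReal |f x| ∂μ) / μ B ^ (1 / q)

/-- The set `{f ≠ 0}` is σ-finite for `μ`. -/
def SigmaFinSupp {α : Type*} [MeasurableSpace α] (μ : Measure α) (f : α → ℝ) : Prop :=
  ∃ s : ℕ → Set α, {x | f x ≠ 0} ⊆ (⋃ n, s n) ∧ ∀ n, μ (s n) < ⊤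

/-- Membership in the weak `L^p` space. -/
def MemW {α : Type*} [MeasurableSpace α] (q : ℝ) (μ : Measure α) (f : α → ℝ) : Prop :=
  Measurable f ∧ SigmaFinSupp μ f ∧ wnorm q μ f < ⊤

/-- The ambient space of `X_k = (∑_{n≥0} ⊕ ℓ^{p,∞}(k·2^n))_{ℓ∞}`: all sequences
`x = (x_n)` with `x_n` a `k·2^n`-tuple of reals. -/
abbrev XFull (k : ℕ) := (n : ℕ) → Fin (k * 2 ^ n) → ℝ

/-- The norm of `X_k`: `sup_n ‖x_n‖`, where `‖·‖` is the weak `ℓ^p` norm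
(counting measure on `Fin (k·2^n)`). -/
noncomputable def Xnorm (q : ℝ) (k : ℕ) (x : XFull k) : ℝ≥0∞ :=
  ⨆ n, wnorm q (Measure.count : Measure (Fin (k * 2 ^ n))) (x n)

/-- Membership in `X_k`. -/
def MemX (q : ℝ) (k : ℕ) (x : XFull k) : Prop := Xnorm q k x < ⊤

lemma two_mul_succ_lt {k n j : ℕ} (h : j < k * 2 ^ n) : 2 * j + 1 < k * 2 ^ (n + 1) := by
  rw [pow_succ, ← mul_assoc]; omega

/-- `Y_k ⊆ X_k`: elements satisfying `x_n(j) = 2^{-1/q}(x_{n+1}(2j-1) + x_{n+1}(2j))`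
(0-indexed: the children of `j` are `2j` and `2j+1`). -/
def Yset (q : ℝ) (k : ℕ) : Set (XFull k) :=
  {x | MemX q k x ∧ ∀ (n : ℕ) (j : Fin (k * 2 ^ n)),
    x n j = (2 : ℝ) ^ (-(1 / q)) *
      (x (n + 1) ⟨2 * (j : ℕ), by have := two_mul_succ_lt j.isLt; omega⟩ +
       x (n + 1) ⟨2 * (j : ℕ) + 1, two_mul_succ_lt j.isLt⟩)}

/-- `Z_k ⊆ X_k`: elements whose coordinate sums eventually vanish. -/
def Zset (q : ℝ) (k : ℕ) : Set (XFull k) :=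
  {x | MemX q k x ∧ ∃ i : ℕ, ∀ n ≥ i, ∑ j, x n j = 0}

/-- The element `u ∈ X_k`, `u_n(j) = (k·2^n)^{-1/p}`. -/
noncomputable def uElt (p : ℝ) (k : ℕ) : XFull k :=
  fun n _ => ((k : ℝ) * 2 ^ n) ^ (-(1 / p))

/-- Coordinatewise multiplication of `x ∈ X_k` by the indicator of a set of index pairs. -/
noncomputable def chiMul {k : ℕ} (A : (m : ℕ) → Set (Fin (k * 2 ^ m))) (x : XFull k) :
    XFull k :=
  fun m => (A m).indicator (x m)

/-- The index set `A_{n,j}` (the support of `T_k χ_{[(j-1)/2^n, j/2^n]}`): pairs `(m,i)`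
such that the dyadic interval of `(m,i)` meets that of `(n,j)` in positive Lebesgue
measure (all indices 0-indexed). -/
def Aset (k n : ℕ) (j : Fin (k * 2 ^ n)) : (m : ℕ) → Set (Fin (k * 2 ^ m)) :=
  fun m => {i | 0 < volume (Icc ((i : ℕ) / 2 ^ m : ℝ) (((i : ℕ) + 1) / 2 ^ m) ∩
    Icc ((j : ℕ) / 2 ^ n : ℝ) (((j : ℕ) + 1) / 2 ^ n))}

/-- The projection `P_k : X_k → X_k`, `(P_k x)_n(j) = (k·2^n)^{1/q} Φ_{n,j}(x)`. -/
noncomputable def Pk (q : ℝ) (k : ℕ) (Φ : XFull k → ℝ) (x : XFull k) : XFull k :=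
  fun n j => ((k : ℝ) * 2 ^ n) ^ (1 / q) * Φ (chiMul (Aset k n j) x)

/-!
For `m ≥ n` the index set `A_{n,j}` meets level `m` in the block of descendants of `j`, the fibre
of `i ↦ ⌊i / 2^(m-n)⌋`. Since `Φ` kills `Z_k`, `Φ x` only depends on the level sums
`∑_i x_m(i)` for large `m`: comparing with multiples of `u`, `Φ x = c` when these sums are
`c (k 2^m)^(1/q)`, and `|Φ x| ≤ C` when they are bounded by `C (k 2^m)^(1/q)`.
The blocks give `Φ_{n,j} = Φ_{n+1,2j} + Φ_{n+1,2j+1}`, which is the relation defining `Y_k` for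
`P_k x`; for `y ∈ Y_k` the block sums are `2^((m-n)/q) y_n(j)`, whence `P_k y = y`. Testing `Φ`
on `∑_{j ∈ F} ± χ_{A_{n,j}} x` bounds `∑_{j ∈ F} |Φ_{n,j}(x)|` by
`‖x‖ (|F| / (k 2^n))^(1/q)`, so that in fact `‖P_k x‖ ≤ ‖x‖`.
-/

section WeakNorm

variable {q : ℝ} {N : ℕ}

lemma setLIntegral_count_finset (F : Finset (Fin N)) (g : Fin N → ℝ≥0∞) :
    ∫⁻ i in (F : Set (Fin N)), g i ∂Measure.count = ∑ i ∈ F, g i := by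
  simp [lintegral_finset]

lemma sum_le_wnorm_mul (f : Fin N → ℝ) (F : Finset (Fin N)) :
    ∑ i ∈ F, ENNReal.ofReal |f i| ≤
      wnorm q Measure.count f * (F.card : ℝ≥0∞) ^ (1 / q) := by
  rcases F.eq_empty_or_nonempty with rfl | hF
  · simp
  have hcard : (F.card : ℝ≥0∞) ≠ 0 := by simpa using hF.card_pos.ne'
  have hF_count : Measure.count (F : Set (Fin N)) = F.card := Measure.count_apply_finset F
  have hquot : (∑ i ∈ F, ENNReal.ofReal |f i|) / (F.card : ℝ≥0∞) ^ (1 / q)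
      ≤ wnorm q Measure.count f := by
    refine le_iSup₂_of_le (F : Set (Fin N)) ⟨F.measurableSet, ?_, ?_⟩ ?_
    · simpa [hF_count, pos_iff_ne_zero] using hcard
    · simp [hF_count]
    · rw [setLIntegral_count_finset, hF_count]
  rwa [ENNReal.div_le_iff (ENNReal.rpow_pos (pos_iff_ne_zero.2 hcard) (natCast_ne_top _)).ne'
    (ENNReal.rpow_ne_top_of_ne_zero hcard (natCast_ne_top _))] at hquot

lemma wnorm_le_of_forall_sum_le {C : ℝ≥0∞} (f : Fin N → ℝ)
    (h : ∀ F : Finset (Fin N), F.Nonempty →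
      ∑ i ∈ F, ENNReal.ofReal |f i| ≤ C * (F.card : ℝ≥0∞) ^ (1 / q)) :
    wnorm q Measure.count f ≤ C := by
  refine iSup₂_le fun B ⟨_, hB, _⟩ => ?_
  lift B to Finset (Fin N) using B.toFinite
  rw [Measure.count_apply_finset, Nat.cast_pos, Finset.card_pos] at hB
  rw [setLIntegral_count_finset, Measure.count_apply_finset]
  exact ENNReal.div_le_of_le_mul (h B hB)

lemma wnorm_mono {f g : Fin N → ℝ} (h : ∀ i, |f i| ≤ |g i|) :
    wnorm q Measure.count f ≤ wnorm q Measure.count g :=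
  wnorm_le_of_forall_sum_le f fun F _ =>
    (Finset.sum_le_sum fun i _ => ENNReal.ofReal_le_ofReal (h i)).trans (sum_le_wnorm_mul g F)

lemma wnorm_add_le (f g : Fin N → ℝ) :
    wnorm q Measure.count (f + g) ≤ wnorm q Measure.count f + wnorm q Measure.count g := by
  refine wnorm_le_of_forall_sum_le _ fun F _ => ?_
  calc ∑ i ∈ F, ENNReal.ofReal |(f + g) i|
      ≤ ∑ i ∈ F, (ENNReal.ofReal |f i| + ENNReal.ofReal |g i|) :=
        Finset.sum_le_sum fun i _ => by
          rw [← ENNReal.ofReal_add (abs_nonneg _) (abs_nonneg _)]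
          exact ENNReal.ofReal_le_ofReal (abs_add_le _ _)
    _ ≤ _ := by
        rw [Finset.sum_add_distrib, add_mul]
        exact add_le_add (sum_le_wnorm_mul f F) (sum_le_wnorm_mul g F)

lemma wnorm_smul_le (c : ℝ) (f : Fin N → ℝ) :
    wnorm q Measure.count (c • f) ≤ ENNReal.ofReal |c| * wnorm q Measure.count f := by
  refine wnorm_le_of_forall_sum_le _ fun F _ => ?_
  calc ∑ i ∈ F, ENNReal.ofReal |(c • f) i|
      = ENNReal.ofReal |c| * ∑ i ∈ F, ENNReal.ofReal |f i| := by
        simp_rw [Finset.mul_sum, Pi.smul_apply, smul_eq_mul, abs_mul,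
          ENNReal.ofReal_mul (abs_nonneg c)]
    _ ≤ _ := by
        rw [mul_assoc]
        exact mul_le_mul_right (sum_le_wnorm_mul f F) _

lemma wnorm_const_le (hq : 1 ≤ q) (a : ℝ) :
    wnorm q Measure.count (fun _ : Fin N => a) ≤
      (N : ℝ≥0∞) ^ (1 - 1 / q) * ENNReal.ofReal |a| := by
  refine wnorm_le_of_forall_sum_le _ fun F hF => ?_
  have hcard : (F.card : ℝ≥0∞) ≠ 0 := by simpa using hF.card_pos.ne'
  have hFN : (F.card : ℝ≥0∞) ≤ N := by
    exact_mod_cast (Finset.card_le_univ F).trans_eq (by simp)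
  calc ∑ _i ∈ F, ENNReal.ofReal |a|
      = (F.card : ℝ≥0∞) ^ (1 - 1 / q) * ENNReal.ofReal |a| *
          (F.card : ℝ≥0∞) ^ (1 / q) := by
        rw [Finset.sum_const, nsmul_eq_mul, mul_right_comm, ← ENNReal.rpow_add _ _ hcard
          (natCast_ne_top _), sub_add_cancel, ENNReal.rpow_one]
    _ ≤ _ := by
        have : 1 / q ≤ 1 := div_le_one_of_le₀ hq (zero_le_one.trans hq)
        gcongr

end WeakNorm

section SequenceSpace

variable {q : ℝ} {k : ℕ}

lemma wnorm_le_Xnorm (x : XFull k) (n : ℕ) : wnorm q Measure.count (x n) ≤ Xnorm q k x :=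
  le_iSup (fun n => wnorm q Measure.count (x n)) n

lemma Xnorm_mono {x y : XFull k} (h : ∀ n i, |x n i| ≤ |y n i|) : Xnorm q k x ≤ Xnorm q k y :=
  iSup_le fun n => (wnorm_mono (h n)).trans (wnorm_le_Xnorm y n)

lemma Xnorm_add_le (x y : XFull k) : Xnorm q k (x + y) ≤ Xnorm q k x + Xnorm q k y :=
  iSup_le fun n => (wnorm_add_le (x n) (y n)).trans
    (add_le_add (wnorm_le_Xnorm x n) (wnorm_le_Xnorm y n))

lemma Xnorm_smul_le (c : ℝ) (x : XFull k) :
    Xnorm q k (c • x) ≤ ENNReal.ofReal |c| * Xnorm q k x :=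
  iSup_le fun n => (wnorm_smul_le c (x n)).trans (mul_le_mul_right (wnorm_le_Xnorm x n) _)

lemma MemX.zero : MemX q k 0 :=
  lt_of_le_of_lt (iSup_le fun _ => wnorm_le_of_forall_sum_le _ fun _ _ => by simp) zero_lt_top

lemma MemX.add {x y : XFull k} (hx : MemX q k x) (hy : MemX q k y) : MemX q k (x + y) :=
  (Xnorm_add_le x y).trans_lt (ENNReal.add_lt_top.2 ⟨hx, hy⟩)

lemma MemX.smul (c : ℝ) {x : XFull k} (hx : MemX q k x) : MemX q k (c • x) :=
  (Xnorm_smul_le c x).trans_lt (ENNReal.mul_lt_top ofReal_lt_top hx)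

lemma MemX.sub {x y : XFull k} (hx : MemX q k x) (hy : MemX q k y) : MemX q k (x - y) := by
  simpa [sub_eq_add_neg] using hx.add (hy.smul (-1))

lemma MemX.sum {ι : Type*} (F : Finset ι) {x : ι → XFull k}
    (hx : ∀ j ∈ F, MemX q k (x j)) :
    MemX q k (∑ j ∈ F, x j) := by
  classical
  induction F using Finset.induction_on with
  | empty => simpa using MemX.zero
  | insert a F ha ih =>
    rw [Finset.sum_insert ha]
    exact (hx a (F.mem_insert_self a)).add (ih fun j hj => hx j (Finset.mem_insert_of_mem hj))

lemma MemX.chiMul (A : (m : ℕ) → Set (Fin (k * 2 ^ m))) {x : XFull k} (hx : MemX q k x) :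
    MemX q k (chiMul A x) := by
  refine (Xnorm_mono fun n i => ?_).trans_lt hx
  by_cases hi : i ∈ A n <;> simp [_root_.chiMul, hi]

lemma chiMul_add (A : (m : ℕ) → Set (Fin (k * 2 ^ m))) (x y : XFull k) :
    chiMul A (x + y) = chiMul A x + chiMul A y := by
  funext m
  exact indicator_add' (A m) (x m) (y m)

lemma chiMul_smul (A : (m : ℕ) → Set (Fin (k * 2 ^ m))) (c : ℝ) (x : XFull k) :
    chiMul A (c • x) = c • chiMul A x := by
  funext m
  exact indicator_const_smul (A m) c (x m)

end SequenceSpace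

lemma levelSize_pos {k : ℕ} (hk : 1 ≤ k) (m : ℕ) : (0 : ℝ) < (k : ℝ) * 2 ^ m := by
  have : (1 : ℝ) ≤ k := by exact_mod_cast hk
  positivity

lemma ofReal_rpow_levelSize {k : ℕ} (hk : 1 ≤ k) (m : ℕ) (r : ℝ) :
    ENNReal.ofReal (((k : ℝ) * 2 ^ m) ^ r) = ((k * 2 ^ m : ℕ) : ℝ≥0∞) ^ r := by
  rw [← ENNReal.ofReal_rpow_of_pos (levelSize_pos hk m)]
  norm_cast

lemma rpow_levelSize {k n m : ℕ} (hnm : n ≤ m) (r : ℝ) :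
    ((k : ℝ) * 2 ^ m) ^ r = ((k : ℝ) * 2 ^ n) ^ r * ((2 : ℝ) ^ r) ^ (m - n) := by
  obtain ⟨e, rfl⟩ := Nat.exists_eq_add_of_le hnm
  rw [pow_add, ← mul_assoc, Real.mul_rpow (by positivity) (by positivity),
    Real.rpow_pow_comm zero_le_two, add_tsub_cancel_left]

section Functional

variable {p q : ℝ} {k : ℕ} {Φ : XFull k → ℝ}

lemma sum_uElt (hpq : p.HolderConjugate q) (hk : 1 ≤ k) (m : ℕ) :
    ∑ i, uElt p k m i = ((k : ℝ) * 2 ^ m) ^ (1 / q) := by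
  rw [one_div q, ← hpq.one_sub_inv, sub_eq_add_neg, Real.rpow_add (levelSize_pos hk m),
    Real.rpow_one]
  simp [uElt]

lemma Xnorm_uElt_le (hpq : p.HolderConjugate q) (hk : 1 ≤ k) : Xnorm q k (uElt p k) ≤ 1 := by
  refine iSup_le fun m =>
    (wnorm_const_le (N := k * 2 ^ m) hpq.symm.lt.le (((k : ℝ) * 2 ^ m) ^ (-(1 / p)))).trans_eq ?_
  have hcard : ((k * 2 ^ m : ℕ) : ℝ≥0∞) ≠ 0 := by simp; omega
  rw [abs_of_nonneg (Real.rpow_nonneg (levelSize_pos hk m).le _), ofReal_rpow_levelSize hk,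
    one_div q, hpq.symm.one_sub_inv, one_div, ← ENNReal.rpow_add _ _ hcard (natCast_ne_top _),
    add_neg_cancel, ENNReal.rpow_zero]

lemma memX_uElt (hpq : p.HolderConjugate q) (hk : 1 ≤ k) : MemX q k (uElt p k) :=
  (Xnorm_uElt_le hpq hk).trans_lt one_lt_top

lemma Phi_sum (hΦadd : ∀ x y : XFull k, MemX q k x → MemX q k y → Φ (x + y) = Φ x + Φ y)
    {ι : Type*} (F : Finset ι) {x : ι → XFull k} (hx : ∀ j ∈ F, MemX q k (x j)) :
    Φ (∑ j ∈ F, x j) = ∑ j ∈ F, Φ (x j) := by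
  classical
  induction F using Finset.induction_on with
  | empty => simpa using hΦadd 0 0 MemX.zero MemX.zero
  | insert a F ha ih =>
    have hF : ∀ j ∈ F, MemX q k (x j) := fun j hj => hx j (Finset.mem_insert_of_mem hj)
    rw [Finset.sum_insert ha, Finset.sum_insert ha,
      hΦadd _ _ (hx a (F.mem_insert_self a)) (MemX.sum F hF), ih hF]

lemma Phi_eq_of_sum_eq
    (hΦadd : ∀ x y : XFull k, MemX q k x → MemX q k y → Φ (x + y) = Φ x + Φ y)
    (hΦZ : ∀ z ∈ Zset q k, Φ z = 0) {x y : XFull k} (hx : MemX q k x) (hy : MemX q k y)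
    (M : ℕ) (h : ∀ m ≥ M, ∑ i, x m i = ∑ i, y m i) : Φ x = Φ y := by
  have hZ : x - y ∈ Zset q k :=
    ⟨hx.sub hy, M, fun m hm => by simp [Finset.sum_sub_distrib, h m hm]⟩
  simpa [hΦZ _ hZ] using hΦadd (x - y) y (hx.sub hy) hy

lemma Phi_eq_of_sum_eq_mul_rpow
    (hΦadd : ∀ x y : XFull k, MemX q k x → MemX q k y → Φ (x + y) = Φ x + Φ y)
    (hΦsmul : ∀ (c : ℝ) (x : XFull k), MemX q k x → Φ (c • x) = c * Φ x)
    (hΦu : Φ (uElt p k) = 1) (hΦZ : ∀ z ∈ Zset q k, Φ z = 0)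
    (hpq : p.HolderConjugate q) (hk : 1 ≤ k) {y : XFull k} (hy : MemX q k y) (M : ℕ) (c : ℝ)
    (h : ∀ m ≥ M, ∑ i, y m i = c * ((k : ℝ) * 2 ^ m) ^ (1 / q)) : Φ y = c := by
  have hu := memX_uElt hpq hk
  rw [Phi_eq_of_sum_eq hΦadd hΦZ hy (hu.smul c) M fun m hm => ?_, hΦsmul c _ hu, hΦu, mul_one]
  simp [h m hm, ← Finset.mul_sum, sum_uElt hpq hk]

lemma ofReal_abs_Phi_le_of_sum_le
    (hΦadd : ∀ x y : XFull k, MemX q k x → MemX q k y → Φ (x + y) = Φ x + Φ y)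
    (hΦbd : ∀ x : XFull k, MemX q k x → ENNReal.ofReal |Φ x| ≤ Xnorm q k x)
    (hΦZ : ∀ z ∈ Zset q k, Φ z = 0) (hpq : p.HolderConjugate q) (hk : 1 ≤ k)
    {y : XFull k} (hy : MemX q k y) (M : ℕ) {C : ℝ≥0∞}
    (h : ∀ m ≥ M,
      ENNReal.ofReal |∑ i, y m i| ≤ C * ((k * 2 ^ m : ℕ) : ℝ≥0∞) ^ (1 / q)) :
    ENNReal.ofReal |Φ y| ≤ C := by
  rcases eq_or_ne C ⊤ with rfl | hC
  · exact le_top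
  set c : ℕ → ℝ := fun m =>
    if M ≤ m then (∑ i, y m i) / ((k : ℝ) * 2 ^ m) ^ (1 / q) else 0
  set w : XFull k := fun m => c m • uElt p k m
  have hc : ∀ m, ENNReal.ofReal |c m| ≤ C := by
    intro m
    simp only [c]
    split_ifs with hm
    · have hpos := Real.rpow_pos_of_pos (levelSize_pos hk m) (1 / q)
      rw [abs_div, abs_of_pos hpos, ENNReal.ofReal_div_of_pos hpos,
        ofReal_rpow_levelSize hk]
      exact ENNReal.div_le_of_le_mul (h m hm)
    · simp
  have hw : Xnorm q k w ≤ C := iSup_le fun m =>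
    calc wnorm q Measure.count (w m) ≤ ENNReal.ofReal |c m| * Xnorm q k (uElt p k) :=
          (wnorm_smul_le _ _).trans (mul_le_mul_right (wnorm_le_Xnorm _ m) _)
      _ ≤ C := by simpa using mul_le_mul' (hc m) (Xnorm_uElt_le hpq hk)
  have hwX : MemX q k w := hw.trans_lt hC.lt_top
  rw [Phi_eq_of_sum_eq hΦadd hΦZ hy hwX M fun m hm => ?_]
  · exact (hΦbd w hwX).trans hw
  have hpos := Real.rpow_pos_of_pos (levelSize_pos hk m) (1 / q)
  simp only [w, c, if_pos hm, Pi.smul_apply, smul_eq_mul, ← Finset.mul_sum, sum_uElt hpq hk,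
    div_mul_cancel₀ _ hpos.ne']

end Functional

section Dyadic

variable {k : ℕ}

lemma div_two_pow_sub_lt {n m i : ℕ} (hi : i < k * 2 ^ m) : i / 2 ^ (m - n) < k * 2 ^ n := by
  rw [Nat.div_lt_iff_lt_mul (by positivity), mul_assoc, ← pow_add]
  exact hi.trans_le (Nat.mul_le_mul_left _ (Nat.pow_le_pow_right two_pos (by omega)))

/-- For `n ≤ m`, the index at level `n` whose dyadic interval contains that of `i` at
level `m`. -/
def ancestor {m : ℕ} (n : ℕ) (i : Fin (k * 2 ^ m)) : Fin (k * 2 ^ n) :=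
  ⟨i / 2 ^ (m - n), div_two_pow_sub_lt i.isLt⟩

def leftChild {n : ℕ} (j : Fin (k * 2 ^ n)) : Fin (k * 2 ^ (n + 1)) :=
  ⟨2 * j, by have := two_mul_succ_lt j.isLt; omega⟩

def rightChild {n : ℕ} (j : Fin (k * 2 ^ n)) : Fin (k * 2 ^ (n + 1)) :=
  ⟨2 * j + 1, two_mul_succ_lt j.isLt⟩

lemma ancestor_self {n : ℕ} (i : Fin (k * 2 ^ n)) : ancestor n i = i := by
  ext
  simp [ancestor]

lemma ancestor_ancestor {n l m : ℕ} (hnl : n ≤ l) (hlm : l ≤ m) (i : Fin (k * 2 ^ m)) :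
    ancestor n (ancestor l i) = ancestor n i := by
  ext
  simp only [ancestor, Nat.div_div_eq_div_mul, ← pow_add]
  congr 2
  omega

lemma mem_Aset_iff {n m : ℕ} (hnm : n ≤ m) {j : Fin (k * 2 ^ n)} {i : Fin (k * 2 ^ m)} :
    i ∈ Aset k n j m ↔ ancestor n i = j := by
  obtain ⟨e, rfl⟩ := Nat.exists_eq_add_of_le hnm
  have hi : ((i : ℕ) : ℝ) / 2 ^ (n + e) < ((i : ℕ) + 1) / 2 ^ (n + e) := by gcongr; linarith
  have hj : ((j : ℕ) : ℝ) / 2 ^ n < ((j : ℕ) + 1) / 2 ^ n := by gcongr; linarith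
  simp only [Aset, mem_ofPred_eq, Icc_inter_Icc, Real.volume_Icc, ENNReal.ofReal_pos, sub_pos,
    lt_inf_iff, sup_lt_iff, hi, hj, true_and, and_true]
  rw [pow_add (2 : ℝ) n e, mul_comm ((2 : ℝ) ^ n), ← div_div, ← div_div,
    div_lt_div_iff_of_pos_right (by positivity), div_lt_div_iff_of_pos_right (by positivity),
    lt_div_iff₀ (by positivity), div_lt_iff₀ (by positivity)]
  have hd : 0 < 2 ^ e := by positivity
  rw [Fin.ext_iff, show ((ancestor n i : Fin _) : ℕ) = i / 2 ^ e by simp [ancestor],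
    le_antisymm_iff, ← Nat.lt_add_one_iff, Nat.div_lt_iff_lt_mul hd, Nat.le_div_iff_mul_le hd]
  norm_cast
  omega

lemma sum_ancestor_eq_sum_sum {n l m : ℕ} (hnl : n ≤ l) (hlm : l ≤ m) (j : Fin (k * 2 ^ n))
    (f : Fin (k * 2 ^ m) → ℝ) :
    ∑ i with ancestor n i = j, f i =
      ∑ i' : Fin (k * 2 ^ l) with ancestor n i' = j, ∑ i with ancestor l i = i', f i := by
  rw [Finset.sum_fiberwise_eq_sum_filter]
  simp [ancestor_ancestor hnl hlm]

lemma sum_ancestor_succ {n : ℕ} (j : Fin (k * 2 ^ n)) (f : Fin (k * 2 ^ (n + 1)) → ℝ) :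
    ∑ i with ancestor n i = j, f i = f (leftChild j) + f (rightChild j) := by
  have hfib : Finset.univ.filter (ancestor n · = j) = {leftChild j, rightChild j} := by
    ext i
    simp only [Finset.mem_filter, Finset.mem_univ, true_and, Finset.mem_insert,
      Finset.mem_singleton, ancestor, leftChild, rightChild, Fin.ext_iff, add_tsub_cancel_left,
      pow_one]
    omega
  rw [hfib, Finset.sum_pair (by simp [leftChild, rightChild, Fin.ext_iff])]

lemma card_ancestor_mem_le {n m : ℕ} (F : Finset (Fin (k * 2 ^ n))) :
    (Finset.univ.filter fun i : Fin (k * 2 ^ m) => ancestor n i ∈ F).card ≤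
      F.card * 2 ^ (m - n) := by
  rw [← Finset.card_range (2 ^ (m - n)), ← Finset.card_product]
  refine Finset.card_le_card_of_injOn (fun i => (ancestor n i, (i : ℕ) % 2 ^ (m - n)))
    (fun i hi => Finset.mem_product.2
      ⟨(Finset.mem_filter.1 hi).2, Finset.mem_range.2 (Nat.mod_lt _ (by positivity))⟩)
    fun i _ i' _ h => ?_
  simp only [Prod.mk.injEq, ancestor, Fin.ext_iff] at h
  rw [Fin.ext_iff, ← Nat.div_add_mod i (2 ^ (m - n)), ← Nat.div_add_mod i' (2 ^ (m - n)),
    h.1, h.2]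

lemma sum_chiMul_Aset {n m : ℕ} (hnm : n ≤ m) (j : Fin (k * 2 ^ n)) (x : XFull k) :
    ∑ i, chiMul (Aset k n j) x m i = ∑ i with ancestor n i = j, x m i := by
  classical
  rw [Finset.sum_filter]
  exact Finset.sum_congr rfl fun i _ => by simp [chiMul, indicator_apply, mem_Aset_iff hnm]

end Dyadic

section Projection

variable {p q : ℝ} {k : ℕ} {Φ : XFull k → ℝ}

lemma Pk_add (hΦadd : ∀ x y : XFull k, MemX q k x → MemX q k y → Φ (x + y) = Φ x + Φ y)
    {x y : XFull k} (hx : MemX q k x) (hy : MemX q k y) :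
    Pk q k Φ (x + y) = Pk q k Φ x + Pk q k Φ y := by
  funext n j
  simp only [Pk, Pi.add_apply, chiMul_add, hΦadd _ _ (hx.chiMul _) (hy.chiMul _), mul_add]

lemma Pk_smul (hΦsmul : ∀ (c : ℝ) (x : XFull k), MemX q k x → Φ (c • x) = c * Φ x)
    (c : ℝ) {x : XFull k} (hx : MemX q k x) : Pk q k Φ (c • x) = c • Pk q k Φ x := by
  funext n j
  simp only [Pk, Pi.smul_apply, smul_eq_mul, chiMul_smul, hΦsmul _ _ (hx.chiMul _)]
  ring

lemma Phi_chiMul_Aset_eq_add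
    (hΦadd : ∀ x y : XFull k, MemX q k x → MemX q k y → Φ (x + y) = Φ x + Φ y)
    (hΦZ : ∀ z ∈ Zset q k, Φ z = 0) {x : XFull k} (hx : MemX q k x) (n : ℕ)
    (j : Fin (k * 2 ^ n)) :
    Φ (chiMul (Aset k n j) x) =
      Φ (chiMul (Aset k (n + 1) (leftChild j)) x) +
        Φ (chiMul (Aset k (n + 1) (rightChild j)) x) := by
  rw [← hΦadd _ _ (hx.chiMul _) (hx.chiMul _)]
  refine Phi_eq_of_sum_eq hΦadd hΦZ (hx.chiMul _) ((hx.chiMul _).add (hx.chiMul _)) (n + 1)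
    fun m hm => ?_
  simp only [Pi.add_apply, Finset.sum_add_distrib, sum_chiMul_Aset (n.le_succ.trans hm),
    sum_chiMul_Aset hm]
  rw [sum_ancestor_eq_sum_sum n.le_succ hm, sum_ancestor_succ]

lemma Pk_apply_eq_children
    (hΦadd : ∀ x y : XFull k, MemX q k x → MemX q k y → Φ (x + y) = Φ x + Φ y)
    (hΦZ : ∀ z ∈ Zset q k, Φ z = 0) {x : XFull k} (hx : MemX q k x) (n : ℕ)
    (j : Fin (k * 2 ^ n)) :
    Pk q k Φ x n j = (2 : ℝ) ^ (-(1 / q)) *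
      (Pk q k Φ x (n + 1) (leftChild j) + Pk q k Φ x (n + 1) (rightChild j)) := by
  simp only [Pk]
  rw [Phi_chiMul_Aset_eq_add hΦadd hΦZ hx n j, rpow_levelSize (Nat.le_add_right n 1),
    Nat.add_sub_cancel_left, pow_one, Real.rpow_neg zero_le_two]
  field_simp

lemma abs_sum_sum_smul_chiMul_Aset_le {n m : ℕ} (hnm : n ≤ m) (F : Finset (Fin (k * 2 ^ n)))
    {c : Fin (k * 2 ^ n) → ℝ} (hc : ∀ j, |c j| ≤ 1) (x : XFull k) :
    |∑ i, (∑ j ∈ F, c j • chiMul (Aset k n j) x) m i| ≤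
      ∑ i with ancestor n i ∈ F, |x m i| := by
  simp only [Finset.sum_apply, Pi.smul_apply, smul_eq_mul]
  rw [Finset.sum_comm]
  simp_rw [← Finset.mul_sum, sum_chiMul_Aset hnm]
  rw [← Finset.sum_fiberwise_eq_sum_filter]
  refine (Finset.abs_sum_le_sum_abs _ _).trans (Finset.sum_le_sum fun j _ => ?_)
  rw [abs_mul]
  exact (mul_le_of_le_one_left (abs_nonneg _) (hc j)).trans (Finset.abs_sum_le_sum_abs _ _)

lemma mul_sum_ofReal_abs_Phi_chiMul_Aset_le
    (hΦadd : ∀ x y : XFull k, MemX q k x → MemX q k y → Φ (x + y) = Φ x + Φ y)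
    (hΦsmul : ∀ (c : ℝ) (x : XFull k), MemX q k x → Φ (c • x) = c * Φ x)
    (hΦbd : ∀ x : XFull k, MemX q k x → ENNReal.ofReal |Φ x| ≤ Xnorm q k x)
    (hΦZ : ∀ z ∈ Zset q k, Φ z = 0) (hpq : p.HolderConjugate q) (hk : 1 ≤ k)
    {x : XFull k} (hx : MemX q k x) (n : ℕ) (F : Finset (Fin (k * 2 ^ n))) :
    ((k * 2 ^ n : ℕ) : ℝ≥0∞) ^ (1 / q) *
        ∑ j ∈ F, ENNReal.ofReal |Φ (chiMul (Aset k n j) x)| ≤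
      Xnorm q k x * (F.card : ℝ≥0∞) ^ (1 / q) := by
  set c : Fin (k * 2 ^ n) → ℝ := fun j => SignType.sign (Φ (chiMul (Aset k n j) x))
  set y := ∑ j ∈ F, c j • chiMul (Aset k n j) x
  have hyX : MemX q k y := MemX.sum F fun j _ => (hx.chiMul _).smul _
  have hΦy : Φ y = ∑ j ∈ F, |Φ (chiMul (Aset k n j) x)| := by
    rw [Phi_sum hΦadd F fun j _ => (hx.chiMul _).smul _]
    exact Finset.sum_congr rfl fun j _ => by rw [hΦsmul _ _ (hx.chiMul _), sign_mul_self]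
  have hr : 0 ≤ 1 / q := hpq.symm.one_div_nonneg
  set N : ℝ≥0∞ := ((k * 2 ^ n : ℕ) : ℝ≥0∞) ^ (1 / q)
  have hN0 : N ≠ 0 :=
    (ENNReal.rpow_pos (Nat.cast_pos.2 (Nat.mul_pos hk (Nat.two_pow_pos n))) (natCast_ne_top _)).ne'
  have hNtop : N ≠ ⊤ := ENNReal.rpow_ne_top_of_nonneg hr (natCast_ne_top _)
  have hlevel : ∀ m ≥ n, ENNReal.ofReal |∑ i, y m i|
      ≤ Xnorm q k x * (F.card : ℝ≥0∞) ^ (1 / q) / N *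
          ((k * 2 ^ m : ℕ) : ℝ≥0∞) ^ (1 / q) := by
    intro m hm
    have hsize : ((k * 2 ^ m : ℕ) : ℝ≥0∞) = (k * 2 ^ n : ℕ) * (2 ^ (m - n) : ℕ) := by
      rw [← Nat.cast_mul, mul_assoc, ← pow_add, Nat.add_sub_cancel' hm]
    calc ENNReal.ofReal |∑ i, y m i|
        ≤ ENNReal.ofReal (∑ i with ancestor n i ∈ F, |x m i|) :=
          ENNReal.ofReal_le_ofReal
            (abs_sum_sum_smul_chiMul_Aset_le hm F (fun j => by
              simp only [c]
              cases SignType.sign (Φ (chiMul (Aset k n j) x)) <;> simp) x)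
      _ = ∑ i with ancestor n i ∈ F, ENNReal.ofReal |x m i| :=
          ENNReal.ofReal_sum_of_nonneg fun _ _ => abs_nonneg _
      _ ≤ wnorm q Measure.count (x m) *
            ((Finset.univ.filter (ancestor n · ∈ F)).card : ℝ≥0∞) ^ (1 / q) :=
          sum_le_wnorm_mul _ _
      _ ≤ Xnorm q k x * ((F.card * 2 ^ (m - n) : ℕ) : ℝ≥0∞) ^ (1 / q) := by
          gcongr
          exacts [wnorm_le_Xnorm x m, card_ancestor_mem_le F]
      _ = _ := by
          rw [hsize, Nat.cast_mul, ENNReal.mul_rpow_of_nonneg _ _ hr,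
            ENNReal.mul_rpow_of_nonneg _ _ hr, ← mul_assoc (_ / N),
            ENNReal.div_mul_cancel hN0 hNtop, mul_assoc]
  have hbound := ofReal_abs_Phi_le_of_sum_le hΦadd hΦbd hΦZ hpq hk hyX n hlevel
  rw [hΦy, abs_of_nonneg (Finset.sum_nonneg fun _ _ => abs_nonneg _),
    ENNReal.ofReal_sum_of_nonneg fun _ _ => abs_nonneg _] at hbound
  calc N * ∑ j ∈ F, ENNReal.ofReal |Φ (chiMul (Aset k n j) x)|
      ≤ N * (Xnorm q k x * (F.card : ℝ≥0∞) ^ (1 / q) / N) := by gcongr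
    _ = _ := ENNReal.mul_div_cancel hN0 hNtop

lemma Xnorm_Pk_le
    (hΦadd : ∀ x y : XFull k, MemX q k x → MemX q k y → Φ (x + y) = Φ x + Φ y)
    (hΦsmul : ∀ (c : ℝ) (x : XFull k), MemX q k x → Φ (c • x) = c * Φ x)
    (hΦbd : ∀ x : XFull k, MemX q k x → ENNReal.ofReal |Φ x| ≤ Xnorm q k x)
    (hΦZ : ∀ z ∈ Zset q k, Φ z = 0) (hpq : p.HolderConjugate q) (hk : 1 ≤ k)
    {x : XFull k} (hx : MemX q k x) : Xnorm q k (Pk q k Φ x) ≤ Xnorm q k x := by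
  refine iSup_le fun n => wnorm_le_of_forall_sum_le _ fun F _ => ?_
  have hpos := Real.rpow_pos_of_pos (levelSize_pos hk n) (1 / q)
  calc ∑ j ∈ F, ENNReal.ofReal |Pk q k Φ x n j|
      = ((k * 2 ^ n : ℕ) : ℝ≥0∞) ^ (1 / q) *
          ∑ j ∈ F, ENNReal.ofReal |Φ (chiMul (Aset k n j) x)| := by
        rw [Finset.mul_sum]
        refine Finset.sum_congr rfl fun j _ => ?_
        rw [Pk, abs_mul, abs_of_pos hpos, ENNReal.ofReal_mul hpos.le, ofReal_rpow_levelSize hk]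
    _ ≤ _ := mul_sum_ofReal_abs_Phi_chiMul_Aset_le hΦadd hΦsmul hΦbd hΦZ hpq hk hx n F

lemma Pk_mem_Yset
    (hΦadd : ∀ x y : XFull k, MemX q k x → MemX q k y → Φ (x + y) = Φ x + Φ y)
    (hΦsmul : ∀ (c : ℝ) (x : XFull k), MemX q k x → Φ (c • x) = c * Φ x)
    (hΦbd : ∀ x : XFull k, MemX q k x → ENNReal.ofReal |Φ x| ≤ Xnorm q k x)
    (hΦZ : ∀ z ∈ Zset q k, Φ z = 0) (hpq : p.HolderConjugate q) (hk : 1 ≤ k)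
    {x : XFull k} (hx : MemX q k x) : Pk q k Φ x ∈ Yset q k :=
  ⟨(Xnorm_Pk_le hΦadd hΦsmul hΦbd hΦZ hpq hk hx).trans_lt hx,
    Pk_apply_eq_children hΦadd hΦZ hx⟩

lemma sum_ancestor_eq_of_rec {y : XFull k}
    (hy : ∀ n (j : Fin (k * 2 ^ n)),
      y n j = (2 : ℝ) ^ (-(1 / q)) * (y (n + 1) (leftChild j) + y (n + 1) (rightChild j)))
    {n m : ℕ} (hnm : n ≤ m) (j : Fin (k * 2 ^ n)) :
    ∑ i with ancestor n i = j, y m i = ((2 : ℝ) ^ (1 / q)) ^ (m - n) * y n j := by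
  induction m, hnm using Nat.le_induction with
  | base => simp [ancestor_self, Finset.filter_eq']
  | succ m hnm ih =>
    have hchildren : ∀ i : Fin (k * 2 ^ m),
        y (m + 1) (leftChild i) + y (m + 1) (rightChild i) = (2 : ℝ) ^ (1 / q) * y m i := by
      intro i
      rw [hy m i, Real.rpow_neg zero_le_two]
      field_simp
    rw [sum_ancestor_eq_sum_sum hnm m.le_succ]
    simp_rw [sum_ancestor_succ, hchildren, ← Finset.mul_sum, ih, Nat.sub_add_comm hnm, pow_succ]
    ring

lemma Pk_eq_self_of_mem_Yset
    (hΦadd : ∀ x y : XFull k, MemX q k x → MemX q k y → Φ (x + y) = Φ x + Φ y)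
    (hΦsmul : ∀ (c : ℝ) (x : XFull k), MemX q k x → Φ (c • x) = c * Φ x)
    (hΦu : Φ (uElt p k) = 1) (hΦZ : ∀ z ∈ Zset q k, Φ z = 0)
    (hpq : p.HolderConjugate q) (hk : 1 ≤ k) {y : XFull k} (hy : y ∈ Yset q k) :
    Pk q k Φ y = y := by
  funext n j
  have hpos := levelSize_pos hk n
  have hPhi : Φ (chiMul (Aset k n j) y) = ((k : ℝ) * 2 ^ n) ^ (-(1 / q)) * y n j := by
    refine Phi_eq_of_sum_eq_mul_rpow hΦadd hΦsmul hΦu hΦZ hpq hk (hy.1.chiMul _) n _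
      fun m hm => ?_
    rw [sum_chiMul_Aset hm, sum_ancestor_eq_of_rec hy.2 hm, rpow_levelSize hm,
      Real.rpow_neg hpos.le]
    field_simp
  rw [Pk, hPhi, ← mul_assoc, ← Real.rpow_add hpos, add_neg_cancel, Real.rpow_zero, one_mul]

end Projection

/-- Proposition 3 of the paper: `P_k` is a linear projection from `X_k` onto `Y_k` of norm
at most `q²`. -/
theorem Pk_projection_onto_Yk (p q : ℝ) (hp : 1 < p) (hq : q = p / (p - 1))
    (k : ℕ) (hk : 1 ≤ k)
    (Φ : XFull k → ℝ)
    (hΦadd : ∀ x y : XFull k, MemX q k x → MemX q k y → Φ (x + y) = Φ x + Φ y)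
    (hΦsmul : ∀ (c : ℝ) (x : XFull k), MemX q k x → Φ (c • x) = c * Φ x)
    (hΦbd : ∀ x : XFull k, MemX q k x → ENNReal.ofReal |Φ x| ≤ Xnorm q k x)
    (hΦu : Φ (uElt p k) = 1)
    (hΦZ : ∀ z ∈ Zset q k, Φ z = 0) :
    (∀ x : XFull k, MemX q k x →
      Pk q k Φ x ∈ Yset q k ∧ Xnorm q k (Pk q k Φ x) ≤ ENNReal.ofReal (q ^ 2) * Xnorm q k x) ∧
    (∀ y ∈ Yset q k, Pk q k Φ y = y) ∧
    (∀ x y : XFull k, MemX q k x → MemX q k y →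
      Pk q k Φ (x + y) = Pk q k Φ x + Pk q k Φ y) ∧
    (∀ (c : ℝ) (x : XFull k), MemX q k x → Pk q k Φ (c • x) = c • Pk q k Φ x) := by
  have hpq : p.HolderConjugate q := (Real.holderConjugate_iff_eq_conjExponent hp).2 hq
  have hq2 : 1 ≤ ENNReal.ofReal (q ^ 2) := ENNReal.one_le_ofReal.2 (one_le_pow₀ hpq.symm.lt.le)
  refine ⟨fun x hx => ⟨Pk_mem_Yset hΦadd hΦsmul hΦbd hΦZ hpq hk hx, ?_⟩,
    fun y hy => Pk_eq_self_of_mem_Yset hΦadd hΦsmul hΦu hΦZ hpq hk hy,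
    fun x y hx hy => Pk_add hΦadd hx hy, fun c x hx => Pk_smul hΦsmul c hx⟩
  exact (Xnorm_Pk_le hΦadd hΦsmul hΦbd hΦZ hpq hk hx).trans (le_mul_of_one_le_left zero_le hq2)
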